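/- Let A ⊆ B be an integral ring extension and let J be the nilradical of B. Then the extension A ⊆ B is apparently fragile (respectively fragile, respectively globally fragile) if and only if J ⊆ A (so J is the nilradical of both A and B) and the induced extension A/J ⊆ B/J is apparently fragile (respectively fragile, respectively globally fragile). -/

import Mathlib

/-!
A surjection `f : R → R'` whose kernel consists of nilpotents induces a bijection of prime
spectra that matches minimal primes, and so does its restriction `C → f(C)` to any subring `C`.
So if moreover `ker f ⊆ A`, then `C ↦ f(C)` matches the rings between `A` and `R` with those
between `f(A)` and `R'`, and a minimal prime of `A` splits in `C` iff its image splits in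
`f(C)`: `A` is apparently fragile iff `f(A)` is. With `f : B → B/J` and with the induced maps
`B_W → (B/J)_W` of localizations this gives all three equivalences, once `J ⊆ A`.

That `J ⊆ A` is necessary comes from the ring `C = A + J`: its map onto `(A + J)/J = A/J`
identifies its primes with those of `A`, so no prime of `A` splits in `C`, forcing `C = A`.
For fragility this applies to every `A_M ⊆ B_M`, and `J ⊆ A` is then checked locally at the
maximal ideals `M` of `A`.
-/

/-- A ring homomorphism `f : A →+* B` satisfies going-down: whenever `p₁ ⊆ p₂` are primes of `A`
and `Q₂` is a prime of `B` contracting to `p₂`, there is a prime `Q₁ ⊆ Q₂` of `B`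
contracting to `p₁`. -/
def GoingDownHom {A B : Type*} [CommRing A] [CommRing B] (f : A →+* B) : Prop :=
  ∀ (p₁ p₂ : Ideal A), p₁.IsPrime → p₂.IsPrime → p₁ ≤ p₂ →
    ∀ Q₂ : Ideal B, Q₂.IsPrime → Q₂.comap f = p₂ →
      ∃ Q₁ : Ideal B, Q₁.IsPrime ∧ Q₁ ≤ Q₂ ∧ Q₁.comap f = p₁

/-- The canonical map from the localization of a subring `A ⊆ B` at a submonoid `W ⊆ A`
to the localization of `B` at the image of `W` in `B`. -/
noncomputable def locMap {B : Type*} [CommRing B] (A : Subring B) (W : Submonoid A) :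
    Localization W →+* Localization (W.map A.subtype) :=
  IsLocalization.lift (M := W) (S := Localization W)
    (g := (algebraMap B (Localization (W.map A.subtype))).comp A.subtype)
    (fun y => IsLocalization.map_units (M := W.map A.subtype) (Localization (W.map A.subtype))
      ⟨A.subtype y, ⟨y, y.2, rfl⟩⟩)

/-- A subring `A ⊆ B` is perinormal in `B` at the prime `p` of `A`:  the localization `A_p`
(i.e. the image of `Localization.AtPrime p` in `B_{A∖p}`) is the only local ring `T` between
`A_p` and `B_{A∖p}` whose maximal ideal contracts to `pA_p` and which satisfies going-down
over `A_p`. -/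
def PeriAt {B : Type*} [CommRing B] (A : Subring B) (p : Ideal A) (hp : p.IsPrime) : Prop :=
  haveI := hp
  ∀ (T : Subring (Localization (p.primeCompl.map A.subtype)))
    (hT : (locMap A p.primeCompl).range ≤ T),
    IsLocalRing T →
    (∀ M : Ideal T, M.IsMaximal →
      M.comap ((locMap A p.primeCompl).codRestrict T (fun x => hT ⟨x, rfl⟩)) =
        IsLocalRing.maximalIdeal (Localization.AtPrime p)) →
    GoingDownHom ((locMap A p.primeCompl).codRestrict T (fun x => hT ⟨x, rfl⟩)) →
    T = (locMap A p.primeCompl).range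

/-- A subring `A` of `B` is perinormal in `B`. -/
def PerinormalIn {B : Type*} [CommRing B] (A : Subring B) : Prop :=
  ∀ (p : Ideal A) (hp : p.IsPrime), PeriAt A p hp

/-- An integral domain `R` is perinormal:  every local overring of `R`
(local ring between `R` and its fraction field) satisfying going-down over `R`
is a localization of `R` at a prime ideal. -/
def PerinormalDomain (R : Type*) [CommRing R] [IsDomain R] : Prop :=
  ∀ (T : Subring (FractionRing R)) (hT : (algebraMap R (FractionRing R)).range ≤ T),
    IsLocalRing T →
    GoingDownHom ((algebraMap R (FractionRing R)).codRestrict T (fun x => hT ⟨x, rfl⟩)) →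
    ∃ p : Ideal R, p.IsPrime ∧
      (T : Set (FractionRing R)) =
        {x | ∃ r s : R, s ∉ p ∧
          x * algebraMap R (FractionRing R) s = algebraMap R (FractionRing R) r}

/-- A subring `A ⊆ B` is apparently fragile in `B`: for every ring `C` with `A ⊊ C ⊆ B`
there are a minimal prime `p` of `A` and distinct primes `P, Q` of `C` contracting to `p`. -/
def ApparentlyFragile {B : Type*} [CommRing B] (A : Subring B) : Prop :=
  ∀ (C : Subring B) (hAC : A ≤ C), A ≠ C →
    ∃ p ∈ minimalPrimes A, ∃ P Q : Ideal C, P.IsPrime ∧ Q.IsPrime ∧ P ≠ Q ∧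
      P.comap (Subring.inclusion hAC) = p ∧ Q.comap (Subring.inclusion hAC) = p

/-- A subring `A ⊆ B` is fragile in `B`: for every prime `P` of `A`, the extension
`A_P ⊆ B_{A∖P}` is apparently fragile. -/
def Fragile {B : Type*} [CommRing B] (A : Subring B) : Prop :=
  ∀ (P : Ideal A) (hP : P.IsPrime),
    haveI := hP
    ApparentlyFragile (locMap A P.primeCompl).range

/-- A subring `A ⊆ B` is globally fragile in `B`: for every multiplicative subset `W` of `A`,
the extension `A_W ⊆ B_W` is apparently fragile. -/
def GloballyFragile {B : Type*} [CommRing B] (A : Subring B) : Prop :=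
  ∀ W : Submonoid A, ApparentlyFragile (locMap A W).range

/-- An integral domain `S` is a generalized Krull domain: (i) `S` is the intersection of its
localizations at height-one primes (inside its fraction field), (ii) every nonzero element lies
in only finitely many height-one primes, and (iii) the localization at every height-one prime
is a valuation ring. -/
def IsGenKrull (S : Type*) [CommRing S] [IsDomain S] : Prop :=
  (∀ x : FractionRing S,
      (∀ (p : Ideal S) (hp : p.IsPrime), Order.height (⟨p, hp⟩ : PrimeSpectrum S) = 1 →
        ∃ a s : S, s ∉ p ∧ x * algebraMap S (FractionRing S) s = algebraMap S (FractionRing S) a) →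
      ∃ r : S, algebraMap S (FractionRing S) r = x) ∧
  (∀ s : S, s ≠ 0 →
      {p : Ideal S | ∃ hp : p.IsPrime, Order.height (⟨p, hp⟩ : PrimeSpectrum S) = 1 ∧ s ∈ p}.Finite) ∧
  (∀ (p : Ideal S) (hp : p.IsPrime), Order.height (⟨p, hp⟩ : PrimeSpectrum S) = 1 →
      haveI := hp
      ValuationRing (Localization.AtPrime p))

/-- A prime ideal `Q` has height one. -/
def HeightOne {S : Type*} [CommRing S] (Q : Ideal S) : Prop :=
  ∃ hQ : Q.IsPrime, Order.height (⟨Q, hQ⟩ : PrimeSpectrum S) = 1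

open IsLocalization

section NilSurjection

variable {R R' : Type*} [CommRing R] [CommRing R'] {f : R →+* R'}

theorem Ideal.comap_map_eq_self_of_ker_le_nilradical (hf : Function.Surjective f)
    (hker : RingHom.ker f ≤ nilradical R) (p : Ideal R) [p.IsPrime] : (p.map f).comap f = p := by
  rw [Ideal.comap_map_of_surjective' f hf, sup_eq_left]
  exact hker.trans (nilradical_le_prime p)

theorem Ideal.map_isPrime_of_ker_le_nilradical (hf : Function.Surjective f)
    (hker : RingHom.ker f ≤ nilradical R) (p : Ideal R) [p.IsPrime] : (p.map f).IsPrime :=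
  Ideal.map_isPrime_of_surjective hf (hker.trans (nilradical_le_prime p))

theorem minimalPrimes_eq_comap_image_of_ker_le_nilradical (hf : Function.Surjective f)
    (hker : RingHom.ker f ≤ nilradical R) :
    minimalPrimes R = Ideal.comap f '' minimalPrimes R' := by
  have hrad : (RingHom.ker f).radical = (⊥ : Ideal R).radical :=
    le_antisymm (Ideal.radical_le_radical_iff.mpr hker) (Ideal.radical_mono bot_le)
  rw [minimalPrimes, minimalPrimes, ← Ideal.comap_minimalPrimes_eq_of_surjective hf,
    ← RingHom.ker_eq_comap_bot, ← Ideal.radical_minimalPrimes, hrad, Ideal.radical_minimalPrimes]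

theorem RingHom.ker_restrict_le_nilradical (hker : RingHom.ker f ≤ nilradical R)
    (C : Subring R) (C' : Subring R') (h : ∀ x ∈ C, f x ∈ C') :
    RingHom.ker (f.restrict C C' h) ≤ nilradical C := fun x hx => by
  obtain ⟨n, hn⟩ := hker (congrArg Subtype.val hx : f x = 0)
  exact ⟨n, Subtype.ext hn⟩

theorem RingHom.restrict_surjective {C : Subring R} {C' : Subring R'} (h : ∀ x ∈ C, f x ∈ C')
    (hsurj : ∀ y ∈ C', ∃ x ∈ C, f x = y) : Function.Surjective (f.restrict C C' h) := by
  rintro ⟨y, hy⟩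
  obtain ⟨x, hx, rfl⟩ := hsurj y hy
  exact ⟨⟨x, hx⟩, rfl⟩

variable (f) in
def RingHom.subringMap (A : Subring R) : A →+* A.map f :=
  f.restrict A (A.map f) fun x hx => Subring.mem_map.mpr ⟨x, hx, rfl⟩

variable (f) in
theorem RingHom.subringMap_surjective (A : Subring R) : Function.Surjective (f.subringMap A) :=
  RingHom.restrict_surjective _ fun _ hy => Subring.mem_map.mp hy

theorem RingHom.ker_subringMap_le_nilradical (hker : RingHom.ker f ≤ nilradical R)
    (A : Subring R) : RingHom.ker (f.subringMap A) ≤ nilradical A :=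
  RingHom.ker_restrict_le_nilradical hker A _ _

end NilSurjection


def RingHom.SplitsMinimalPrime {S C : Type*} [CommRing S] [CommRing C] (g : S →+* C) : Prop :=
  ∃ p ∈ minimalPrimes S, ∃ P Q : Ideal C, P.IsPrime ∧ Q.IsPrime ∧ P ≠ Q ∧
    P.comap g = p ∧ Q.comap g = p

theorem RingHom.not_splitsMinimalPrime_id (S : Type*) [CommRing S] :
    ¬ (RingHom.id S).SplitsMinimalPrime := by
  rintro ⟨p, -, P, Q, -, -, hPQ, hP, hQ⟩
  exact hPQ ((Ideal.comap_id P).symm.trans (hP.trans (hQ.symm.trans (Ideal.comap_id Q))))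

theorem RingHom.splitsMinimalPrime_iff_of_comp_eq {S C S' C' : Type*} [CommRing S] [CommRing C]
    [CommRing S'] [CommRing C'] {g : S →+* C} {g' : S' →+* C'} {eS : S →+* S'} {eC : C →+* C'}
    (hS : Function.Surjective eS) (hSker : RingHom.ker eS ≤ nilradical S)
    (hC : Function.Surjective eC) (hCker : RingHom.ker eC ≤ nilradical C)
    (hcomm : g'.comp eS = eC.comp g) : g.SplitsMinimalPrime ↔ g'.SplitsMinimalPrime := by
  have hcomap (X : Ideal C') : (X.comap eC).comap g = (X.comap g').comap eS := by
    rw [Ideal.comap_comap, Ideal.comap_comap, hcomm]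
  constructor
  · rintro ⟨p, hp, P, Q, hP, hQ, hPQ, rfl, hPQc⟩
    rw [minimalPrimes_eq_comap_image_of_ker_le_nilradical hS hSker] at hp
    obtain ⟨p', hp', hpp'⟩ := hp
    have hlies (X : Ideal C) [X.IsPrime] (hX : X.comap g = P.comap g) :
        (X.map eC).comap g' = p' := by
      apply Ideal.comap_injective_of_surjective eS hS
      rw [← hcomap, Ideal.comap_map_eq_self_of_ker_le_nilradical hC hCker, hX, hpp']
    refine ⟨p', hp', P.map eC, Q.map eC, Ideal.map_isPrime_of_ker_le_nilradical hC hCker P,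
      Ideal.map_isPrime_of_ker_le_nilradical hC hCker Q, fun h => hPQ ?_, hlies P rfl, hlies Q hPQc⟩
    rw [← Ideal.comap_map_eq_self_of_ker_le_nilradical hC hCker P, h,
      Ideal.comap_map_eq_self_of_ker_le_nilradical hC hCker Q]
  · rintro ⟨p', hp', P', Q', hP', hQ', hPQ', hP'c, hQ'c⟩
    refine ⟨p'.comap eS, ?_, P'.comap eC, Q'.comap eC, Ideal.comap_isPrime eC P',
      Ideal.comap_isPrime eC Q', ?_, by rw [hcomap, hP'c], by rw [hcomap, hQ'c]⟩
    · rw [minimalPrimes_eq_comap_image_of_ker_le_nilradical hS hSker]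
      exact Set.mem_image_of_mem _ hp'
    · exact fun h => hPQ' (Ideal.comap_injective_of_surjective eC hC h)

section Transfer

variable {R R' : Type*} [CommRing R] [CommRing R'] {f : R →+* R'}

theorem apparentlyFragile_map_iff (hf : Function.Surjective f)
    (hker : RingHom.ker f ≤ nilradical R) {S : Subring R} (hS : (RingHom.ker f : Set R) ⊆ S) :
    ApparentlyFragile (S.map f) ↔ ApparentlyFragile S := by
  have key {C : Subring R} {C' : Subring R'} (hSC : S ≤ C) (hSC' : S.map f ≤ C')
      (h : ∀ x ∈ C, f x ∈ C') (hsurj : ∀ y ∈ C', ∃ x ∈ C, f x = y) :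
      (Subring.inclusion hSC).SplitsMinimalPrime ↔ (Subring.inclusion hSC').SplitsMinimalPrime :=
    RingHom.splitsMinimalPrime_iff_of_comp_eq (f.subringMap_surjective S)
      (RingHom.ker_subringMap_le_nilradical hker S) (RingHom.restrict_surjective h hsurj)
      (RingHom.ker_restrict_le_nilradical hker _ _ _) (RingHom.ext fun _ => rfl)
  constructor
  · intro h C hSC hne
    have hSC' : S.map f ≤ C.map f := (Subring.gc_map_comap f).monotone_l hSC
    refine (key hSC hSC' (fun x hx => Subring.mem_map.mpr ⟨x, hx, rfl⟩) fun _ => id).mpr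
      (h _ hSC' fun heq => hne ?_)
    rw [← Subring.comap_map_eq_self hS, heq, Subring.comap_map_eq_self (hS.trans hSC)]
  · intro h C' hSC' hne
    have hSC : S ≤ C'.comap f := Subring.map_le_iff_le_comap.mp hSC'
    have hsurj (y : R') (hy : y ∈ C') : ∃ x ∈ C'.comap f, f x = y := by
      obtain ⟨x, rfl⟩ := hf y
      exact ⟨x, hy, rfl⟩
    refine (key hSC hSC' (fun _ => id) hsurj).mp (h _ hSC fun heq => hne ?_)
    rw [heq, Subring.map_comap_eq_self_of_surjective hf]

theorem ApparentlyFragile.comap_map_eq (hker : RingHom.ker f ≤ nilradical R) {A : Subring R}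
    (h : ApparentlyFragile A) :
    (A.map f).comap f = A := by
  by_contra hne
  have hsurj := RingHom.restrict_surjective (C := (A.map f).comap f) (C' := A.map f)
    (fun _ => id) fun _ ⟨x, hx, hfx⟩ => ⟨x, ⟨x, hx, rfl⟩, hfx⟩
  apply RingHom.not_splitsMinimalPrime_id (A.map f)
  refine (RingHom.splitsMinimalPrime_iff_of_comp_eq (f.subringMap_surjective A)
    (RingHom.ker_subringMap_le_nilradical hker A) hsurj
    (RingHom.ker_restrict_le_nilradical hker _ _ _) ?_).mp
    (h _ ((Subring.gc_map_comap f).le_u_l A) (Ne.symm hne))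
  rfl

end Transfer

theorem ApparentlyFragile.nilradical_subset {B : Type*} [CommRing B] {A : Subring B}
    (h : ApparentlyFragile A) : (nilradical B : Set B) ⊆ A := by
  intro x hx
  rw [← h.comap_map_eq Ideal.mk_ker.le]
  refine ⟨0, A.zero_mem, ?_⟩
  rwa [map_zero, eq_comm, Ideal.Quotient.eq_zero_iff_mem]

section Localization

variable {B B' : Type*} [CommRing B] [CommRing B'] (A : Subring B) (W : Submonoid A)

theorem locMap_eq_map : locMap A W = IsLocalization.map _ A.subtype W.le_comap_map := rfl

theorem locMap_mk' (a : A) (w : W) :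
    locMap A W (mk' _ a w) = mk' _ (a : B) ⟨w, Submonoid.mem_map_of_mem A.subtype w.2⟩ :=
  map_mk' _ _ _

theorem mem_range_locMap_iff {z : Localization (W.map A.subtype)} :
    z ∈ (locMap A W).range ↔ ∃ a ∈ A, ∃ v : W.map A.subtype, mk' _ a v = z := by
  constructor
  · rintro ⟨x, rfl⟩
    obtain ⟨⟨a, w⟩, rfl⟩ := mk'_surjective W x
    exact ⟨a, a.2, _, (locMap_mk' A W a w).symm⟩
  · rintro ⟨a, ha, ⟨_, w, hw, rfl⟩, rfl⟩
    exact ⟨mk' _ ⟨a, ha⟩ ⟨w, hw⟩, locMap_mk' A W _ ⟨w, hw⟩⟩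

variable (f : B →+* B')

theorem map_subtype_le_comap_map_subringMap :
    W.map A.subtype ≤ ((W.map (f.subringMap A)).map (A.map f).subtype).comap f := by
  rintro _ ⟨w, hw, rfl⟩
  exact ⟨f.subringMap A w, ⟨w, hw, rfl⟩, rfl⟩

noncomputable def locAmbientMap :
    Localization (W.map A.subtype) →+*
      Localization ((W.map (f.subringMap A)).map (A.map f).subtype) :=
  IsLocalization.map _ f (map_subtype_le_comap_map_subringMap A W f)

theorem locAmbientMap_comp_locMap :
    (locAmbientMap A W f).comp (locMap A W) =
      (locMap (A.map f) (W.map (f.subringMap A))).comp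
        (IsLocalization.map _ (f.subringMap A) W.le_comap_map) := by
  rw [locAmbientMap, locMap_eq_map, locMap_eq_map, IsLocalization.map_comp_map,
    IsLocalization.map_comp_map]
  rfl

variable {f}

theorem locAmbientMap_surjective (hf : Function.Surjective f) :
    Function.Surjective (locAmbientMap A W f) := by
  intro z
  obtain ⟨⟨b', ⟨_, _, ⟨w, hw, rfl⟩, rfl⟩⟩, rfl⟩ :=
    mk'_surjective ((W.map (f.subringMap A)).map (A.map f).subtype) z
  obtain ⟨b, rfl⟩ := hf b'
  exact ⟨mk' _ b ⟨w, Submonoid.mem_map_of_mem _ hw⟩, map_mk' _ _ _⟩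

theorem map_range_locMap_locAmbientMap :
    (locMap A W).range.map (locAmbientMap A W f) =
      (locMap (A.map f) (W.map (f.subringMap A))).range := by
  rw [RingHom.map_range, locAmbientMap_comp_locMap]
  have hsurj := IsLocalization.map_surjective_of_surjective W (Localization W)
    (Localization (W.map (f.subringMap A))) (f.subringMap_surjective A)
  ext y
  refine ⟨fun ⟨x, hx⟩ => ⟨_, hx⟩, fun ⟨x, hx⟩ => ?_⟩
  obtain ⟨x, rfl⟩ := hsurj x
  exact ⟨x, hx⟩

theorem exists_of_mem_ker_locAmbientMap {z : Localization (W.map A.subtype)}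
    (hz : z ∈ RingHom.ker (locAmbientMap A W f)) :
    ∃ (b : B) (v u : W.map A.subtype), f (b * u) = 0 ∧ mk' _ (b * u) (v * u) = z := by
  obtain ⟨⟨b, v⟩, rfl⟩ := mk'_surjective (W.map A.subtype) z
  rw [RingHom.mem_ker, locAmbientMap, map_mk', mk'_eq_zero_iff] at hz
  obtain ⟨⟨_, _, ⟨w, hw, rfl⟩, rfl⟩, hwb⟩ := hz
  refine ⟨b, v, ⟨w, Submonoid.mem_map_of_mem _ hw⟩, ?_, mk'_cancel _ _ _⟩
  rw [map_mul, mul_comm]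
  exact hwb

theorem ker_locAmbientMap_le_nilradical (hker : RingHom.ker f ≤ nilradical B) :
    RingHom.ker (locAmbientMap A W f) ≤ nilradical (Localization (W.map A.subtype)) := by
  intro z hz
  obtain ⟨b, v, u, hbu, rfl⟩ := exists_of_mem_ker_locAmbientMap A W hz
  rw [mk'_eq_mul_mk'_one]
  exact (Commute.all _ _).isNilpotent_mul_right ((mem_nilradical.mp (hker hbu)).map _)

theorem ker_locAmbientMap_subset_range (hA : (RingHom.ker f : Set B) ⊆ A) :
    (RingHom.ker (locAmbientMap A W f) : Set (Localization (W.map A.subtype))) ⊆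
      (locMap A W).range := by
  intro z hz
  obtain ⟨b, v, u, hbu, rfl⟩ := exists_of_mem_ker_locAmbientMap A W hz
  exact (mem_range_locMap_iff A W).mpr ⟨_, hA hbu, _, rfl⟩

end Localization

section Fragility

variable {B B' : Type*} [CommRing B] [CommRing B'] {f : B →+* B'} {A : Subring B}

theorem apparentlyFragile_range_locMap_map_iff (hf : Function.Surjective f)
    (hker : RingHom.ker f ≤ nilradical B) (hA : (RingHom.ker f : Set B) ⊆ A) (W : Submonoid A) :
    ApparentlyFragile (locMap (A.map f) (W.map (f.subringMap A))).range ↔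
      ApparentlyFragile (locMap A W).range := by
  rw [← map_range_locMap_locAmbientMap]
  exact apparentlyFragile_map_iff (locAmbientMap_surjective A W hf)
    (ker_locAmbientMap_le_nilradical A W hker) (ker_locAmbientMap_subset_range A W hA)

theorem globallyFragile_map_iff (hf : Function.Surjective f)
    (hker : RingHom.ker f ≤ nilradical B) (hA : (RingHom.ker f : Set B) ⊆ A) :
    GloballyFragile (A.map f) ↔ GloballyFragile A := by
  refine ⟨fun h W => (apparentlyFragile_range_locMap_map_iff hf hker hA W).mp (h _), fun h W => ?_⟩
  rw [← Submonoid.map_comap_eq_of_surjective (f.subringMap_surjective A) W]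
  exact (apparentlyFragile_range_locMap_map_iff hf hker hA _).mpr (h _)

theorem fragile_map_iff (hf : Function.Surjective f)
    (hker : RingHom.ker f ≤ nilradical B) (hA : (RingHom.ker f : Set B) ⊆ A) :
    Fragile (A.map f) ↔ Fragile A := by
  have hσker := RingHom.ker_subringMap_le_nilradical hker A
  have hσ := f.subringMap_surjective A
  constructor
  · intro h P hP
    have hPσ := Ideal.map_isPrime_of_ker_le_nilradical hσ hσker P
    have hcompl : (P.map (f.subringMap A)).primeCompl = P.primeCompl.map (f.subringMap A) := by
      have := Ideal.map_primeCompl_comap_of_surjective _ hσ (P.map (f.subringMap A))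
      simp only [Ideal.comap_map_eq_self_of_ker_le_nilradical hσ hσker P] at this
      exact this.symm
    have hAF := h _ hPσ
    rw [hcompl] at hAF
    exact (apparentlyFragile_range_locMap_map_iff hf hker hA _).mp hAF
  · intro h P hP
    have hAF := (apparentlyFragile_range_locMap_map_iff hf hker hA _).mpr
      (h (P.comap (f.subringMap A)) inferInstance)
    rwa [Ideal.map_primeCompl_comap_of_surjective _ hσ] at hAF

end Fragility

theorem Subring.mem_of_forall_isMaximal {B : Type*} [CommRing B] (A : Subring B) {x : B}
    (h : ∀ M : Ideal A, M.IsMaximal → ∃ s ∉ M, (s : B) * x ∈ A) : x ∈ A := by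
  let I : Ideal A := (1 : Submodule A B).comap (LinearMap.toSpanSingleton A B x)
  suffices I = ⊤ by
    obtain ⟨y, hy⟩ := Submodule.mem_one.mp (I.eq_top_iff_one.mp this)
    rw [LinearMap.toSpanSingleton_apply, one_smul] at hy
    exact hy ▸ y.2
  by_contra hI
  obtain ⟨M, hM, hIM⟩ := I.exists_le_maximal hI
  obtain ⟨s, hs, hsx⟩ := h M hM
  exact hs (hIM (Submodule.mem_one.mpr ⟨⟨_, hsx⟩, rfl⟩))

theorem Fragile.nilradical_subset {B : Type*} [CommRing B] {A : Subring B} (h : Fragile A) :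
    (nilradical B : Set B) ⊆ A := by
  intro x hx
  refine A.mem_of_forall_isMaximal fun M hM => ?_
  have hxloc := (h M hM.isPrime).nilradical_subset
    ((mem_nilradical.mp hx).map (algebraMap B (Localization (M.primeCompl.map A.subtype))))
  obtain ⟨a, ha, v, hax⟩ := (mem_range_locMap_iff A _).mp hxloc
  rw [mk'_eq_iff_eq_mul, ← map_mul, eq_iff_exists (M.primeCompl.map A.subtype)] at hax
  obtain ⟨c, hcax⟩ := hax
  obtain ⟨w, hw, hwv⟩ := v.2
  obtain ⟨d, hd, hdc⟩ := c.2
  refine ⟨d * w, M.primeCompl.mul_mem hd hw, ?_⟩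
  have hdwx : ((d * w : A) : B) * x = c * a := by
    rw [hcax, Subring.coe_mul, ← hwv, ← hdc]
    simp only [Subring.subtype_apply]
    ring
  exact hdwx ▸ A.mul_mem (hdc ▸ d.2) ha

theorem fragilities_iff_quotient_nilradical_general {B : Type*} [CommRing B] (A : Subring B) :
    (ApparentlyFragile A ↔
      ((nilradical B : Set B) ⊆ A ∧
        ApparentlyFragile (A.map (Ideal.Quotient.mk (nilradical B))))) ∧
    (Fragile A ↔
      ((nilradical B : Set B) ⊆ A ∧
        Fragile (A.map (Ideal.Quotient.mk (nilradical B))))) ∧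
    (GloballyFragile A ↔
      ((nilradical B : Set B) ⊆ A ∧
        GloballyFragile (A.map (Ideal.Quotient.mk (nilradical B))))) := by
  have hf := Ideal.Quotient.mk_surjective (I := nilradical B)
  have hker : RingHom.ker (Ideal.Quotient.mk (nilradical B)) ≤ nilradical B := Ideal.mk_ker.le
  have hA (hJ : (nilradical B : Set B) ⊆ A) :
      (RingHom.ker (Ideal.Quotient.mk (nilradical B)) : Set B) ⊆ A := by
    rwa [Ideal.mk_ker]
  have iff_of_imp {p r : Prop} (hp : p → (nilradical B : Set B) ⊆ A)
      (h : (nilradical B : Set B) ⊆ A → (r ↔ p)) : p ↔ (nilradical B : Set B) ⊆ A ∧ r :=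
    ⟨fun hp' => ⟨hp hp', (h (hp hp')).mpr hp'⟩, fun ⟨hJ, hr⟩ => (h hJ).mp hr⟩
  exact ⟨iff_of_imp ApparentlyFragile.nilradical_subset
      fun hJ => apparentlyFragile_map_iff hf hker (hA hJ),
    iff_of_imp Fragile.nilradical_subset fun hJ => fragile_map_iff hf hker (hA hJ),
    iff_of_imp (fun h => Fragile.nilradical_subset fun P _ => h P.primeCompl)
      fun hJ => globallyFragile_map_iff hf hker (hA hJ)⟩

/-- Let `A ⊆ B` be an integral extension and `J` the nilradical of `B`.
Then `A ⊆ B` is apparently fragile (resp. fragile, resp. globally fragile) iff `J ⊆ A`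
(so that `J` is the nilradical of both `A` and `B`) and the induced extension
`A/J ⊆ B/J` is apparently fragile (resp. fragile, resp. globally fragile). -/
theorem fragilities_iff_quotient_nilradical {B : Type*} [CommRing B] (A : Subring B)
    (hint : Algebra.IsIntegral A B) :
    (ApparentlyFragile A ↔
      ((nilradical B : Set B) ⊆ A ∧
        ApparentlyFragile (A.map (Ideal.Quotient.mk (nilradical B))))) ∧
    (Fragile A ↔
      ((nilradical B : Set B) ⊆ A ∧
        Fragile (A.map (Ideal.Quotient.mk (nilradical B))))) ∧
    (GloballyFragile A ↔
      ((nilradical B : Set B) ⊆ A ∧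
        GloballyFragile (A.map (Ideal.Quotient.mk (nilradical B))))) :=
  fragilities_iff_quotient_nilradical_general A
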